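/- Let σ_{a,b|x,y} (a, b, x, y ∈ {0,1}) be a tripartite assemblage admitting an LHS model σ_{a,b|x,y} = ∑_λ P_λ P(a,b|x,y,λ) ϱ_λ in which every hidden behavior is non-signaling from Bob to Alice, i.e. for each λ, a, x, the marginal ∑_b P(a,b|x,y,λ) is independent of y. Then the wired assemblage σ^wired_{b|x} := ∑_a σ_{a,b|x,a} admits a bipartite LHS model: there exist a finite set Λ', weights Q_μ ≥ 0 summing to 1, density matrices ϱ'_μ, and conditional distributions Q(b|x,μ) with σ^wired_{b|x} = ∑_μ Q_μ Q(b|x,μ) ϱ'_μ. In other words, the wiring y = a cannot expose steering from an LHS model whose hidden behaviors are non-signaling from Bob to Alice. -/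
import Mathlib


open Matrix BigOperators ComplexOrder

noncomputable section

/-- The wiring y = a cannot expose steering from a tripartite LHS model whose hidden
behaviors are all non-signaling from Bob to Alice: the wired assemblage admits a
bipartite LHS model. -/
theorem no_exposure_from_ns_hidden_behaviors
    (σ : Fin 2 → Fin 2 → Fin 2 → Fin 2 → Matrix (Fin 2) (Fin 2) ℂ)
    (hpsd : ∀ a b x y, (σ a b x y).PosSemidef)
    (hnorm : ∀ x y, ∑ a, ∑ b, (σ a b x y).trace = 1)
    (n : ℕ) (P : Fin n → ℝ) (q : Fin 2 → Fin 2 → Fin 2 → Fin 2 → Fin n → ℝ)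
    (ϱ : Fin n → Matrix (Fin 2) (Fin 2) ℂ)
    (hP : ∀ l, 0 ≤ P l) (hPsum : ∑ l, P l = 1)
    (hϱ : ∀ l, (ϱ l).PosSemidef ∧ (ϱ l).trace = 1)
    (hq : ∀ a b x y l, 0 ≤ q a b x y l)
    (hqsum : ∀ x y l, ∑ a, ∑ b, q a b x y l = 1)
    (hσ : ∀ a b x y, σ a b x y = ∑ l, (P l * q a b x y l) • ϱ l)
    (hnsBA : ∀ a x (y y' : Fin 2) l, ∑ b, q a b x y l = ∑ b, q a b x y' l) :
    ∃ (m : ℕ) (Q : Fin m → ℝ) (Qc : Fin 2 → Fin 2 → Fin m → ℝ)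
      (ϱ' : Fin m → Matrix (Fin 2) (Fin 2) ℂ),
      (∀ μ, 0 ≤ Q μ) ∧ (∑ μ, Q μ = 1) ∧
      (∀ μ, (ϱ' μ).PosSemidef ∧ (ϱ' μ).trace = 1) ∧
      (∀ b x μ, 0 ≤ Qc b x μ) ∧ (∀ x μ, ∑ b, Qc b x μ = 1) ∧
      (∀ b x, ∑ a, σ a b x a = ∑ μ, (Q μ * Qc b x μ) • ϱ' μ) := by
  refine ⟨n, P, fun b x l => ∑ a, q a b x a l, ϱ, hP, hPsum, hϱ, ?_, ?_, ?_⟩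
  · intro b x l
    exact Finset.sum_nonneg fun a _ => hq a b x a l
  · intro x l
    rw [Finset.sum_comm]
    calc ∑ a, ∑ b, q a b x a l = ∑ a, ∑ b, q a b x 0 l := by
          exact Finset.sum_congr rfl fun a _ => hnsBA a x a 0 l
      _ = 1 := hqsum x 0 l
  · intro b x
    simp only [hσ]
    rw [Finset.sum_comm]
    refine Finset.sum_congr rfl fun l _ => ?_
    rw [← Finset.sum_smul, ← Finset.mul_sum]
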